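/- arXiv:2302.01604 — 2 statements merged into one kernel-verified Lean document; each statement's English description precedes it below -/
import Mathlib

section
/- Generalized Newton–MacLaurin inequality: Let λ ∈ Γ_k ⊂ ℝ^n (the Gårding cone), and let integers satisfy k > l ≥ 0, r > s ≥ 0, k ≥ r, l ≥ s. Then [ (σ_k(λ)/C(n,k)) / (σ_l(λ)/C(n,l)) ]^{1/(k-l)} ≤ [ (σ_r(λ)/C(n,r)) / (σ_s(λ)/C(n,s)) ]^{1/(r-s)}, with equality when λ₁ = ⋯ = λ_n > 0. -/
open Finset Polynomial

/-- The `j`-th elementary symmetric polynomial of `lam ∈ ℝ^n`. -/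
def esymm (n j : ℕ) (lam : Fin n → ℝ) : ℝ :=
  ∑ s ∈ Finset.univ.powersetCard j, ∏ i ∈ s, lam i

/-- The Gårding cone `Γ_k = {λ ∈ ℝ^n : σ_i(λ) > 0, 1 ≤ i ≤ k}`. -/
def gardingCone (n k : ℕ) : Set (Fin n → ℝ) :=
  {lam | ∀ i : ℕ, 1 ≤ i → i ≤ k → 0 < esymm n i lam}

lemma pair_filter_eq {m : ℕ} (x y : Fin m) (hxy : x ≠ y) :
    ((Finset.univ : Finset (Fin m)).offDiag.filter
      (fun p : Fin m × Fin m => ({p.1, p.2} : Finset (Fin m)) = {x, y})) = {(x,y),(y,x)} := by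
  ext ⟨p1, p2⟩
  simp only [mem_filter, mem_offDiag, mem_univ, true_and, mem_insert, mem_singleton,
    Prod.mk.injEq]
  constructor
  · rintro ⟨hne, hset⟩
    have h1 : p1 ∈ ({x,y} : Finset (Fin m)) := by rw [← hset]; simp
    have h2 : p2 ∈ ({x,y} : Finset (Fin m)) := by rw [← hset]; simp
    simp only [mem_insert, mem_singleton] at h1 h2
    rcases h1 with rfl | rfl
    · rcases h2 with rfl | rfl
      · exact absurd rfl hne
      · exact Or.inl ⟨rfl, rfl⟩
    · rcases h2 with rfl | rfl
      · exact Or.inr ⟨rfl, rfl⟩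
      · exact absurd rfl hne
  · rintro (⟨rfl, rfl⟩ | ⟨rfl, rfl⟩)
    · exact ⟨hxy, rfl⟩
    · exact ⟨hxy.symm, by rw [Finset.pair_comm]⟩

lemma sum_powersetCard_two {m : ℕ} (F : Finset (Fin m) → ℝ) :
    2 * ∑ t ∈ (Finset.univ : Finset (Fin m)).powersetCard 2, F t
      = ∑ p ∈ (Finset.univ : Finset (Fin m)).offDiag, F {p.1, p.2} := by
  have hmap : ∀ p ∈ (Finset.univ : Finset (Fin m)).offDiag,
      ({p.1,p.2} : Finset (Fin m)) ∈ (Finset.univ : Finset (Fin m)).powersetCard 2 := by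
    rintro ⟨x,y⟩ hp
    rw [mem_offDiag] at hp
    rw [mem_powersetCard_univ]
    exact card_pair hp.2.2
  rw [← Finset.sum_fiberwise_of_maps_to hmap (fun p => F {p.1, p.2})]
  rw [Finset.mul_sum]
  refine Finset.sum_congr rfl fun t ht => ?_
  rw [mem_powersetCard_univ] at ht
  obtain ⟨x, y, hxy, rfl⟩ := Finset.card_eq_two.mp ht
  rw [pair_filter_eq x y hxy]
  have hc : ∀ p ∈ ({(x,y),(y,x)} : Finset (Fin m × Fin m)), F {p.1,p.2} = F {x,y} := by
    intro p hp
    simp only [mem_insert, mem_singleton] at hp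
    rcases hp with rfl | rfl
    · rfl
    · simp [Finset.pair_comm]
  rw [Finset.sum_congr rfl hc, Finset.sum_const]
  have hcard : ({(x,y),(y,x)} : Finset (Fin m × Fin m)).card = 2 := by
    rw [Finset.card_insert_of_notMem (by simp [Prod.ext_iff]; exact fun h _ => hxy h),
      Finset.card_singleton]
  rw [hcard]
  push_cast [nsmul_eq_mul]
  ring

lemma sum_powersetCard_compl {m j : ℕ} (hj : j ≤ m) (f : Finset (Fin m) → ℝ) :
    ∑ t ∈ (Finset.univ : Finset (Fin m)).powersetCard j, f t
      = ∑ t ∈ (Finset.univ : Finset (Fin m)).powersetCard (m - j), f tᶜ := by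
  refine Finset.sum_nbij' (fun t => tᶜ) (fun t => tᶜ) ?_ ?_ ?_ ?_ ?_ <;>
    intro t ht <;>
    simp_all [Finset.mem_powersetCard_univ, Finset.card_compl]
  · omega

lemma topNewton (c : ℕ) (v : Fin (c+2) → ℝ) :
    ((c+2:ℕ):ℝ)^2 * (esymm (c+2) c v * esymm (c+2) (c+2) v)
      ≤ (((c+2).choose 2 : ℕ):ℝ) * (esymm (c+2) (c+1) v)^2 := by
  set p : Fin (c+2) → ℝ := fun i => ∏ k ∈ Finset.univ.erase i, v k with hp
  set S := ∑ i, p i with hS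
  set Q := ∑ i, (p i)^2 with hQ
  have hcard : (Finset.univ : Finset (Fin (c+2))).card = c+2 := by simp
  -- σ_{m-1} = S
  have h1 : esymm (c+2) (c+1) v = S := by
    rw [esymm, sum_powersetCard_compl (by omega) (fun t => ∏ i ∈ t, v i)]
    have e1 : c + 2 - (c+1) = 1 := by omega
    rw [e1, Finset.powersetCard_one, Finset.sum_map]
    rw [hS]
    refine Finset.sum_congr rfl fun i _ => ?_
    congr 1
    simp [Finset.compl_singleton]
  -- σ_m = ∏ v
  have h2 : esymm (c+2) (c+2) v = ∏ k, v k := by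
    rw [esymm]
    rw [show (Finset.univ : Finset (Fin (c+2))).powersetCard (c+2) = {Finset.univ} from by
      simpa [hcard] using Finset.powersetCard_self (Finset.univ : Finset (Fin (c+2))),
      Finset.sum_singleton]
  have hpq : ∀ x y : Fin (c+2), x ≠ y →
      p x * p y = (∏ k, v k) * ∏ k ∈ ({x,y} : Finset (Fin (c+2)))ᶜ, v k := by
    intro x y hxy
    have hu : (Finset.univ.erase x) ∪ (Finset.univ.erase y) = Finset.univ := by
      ext a
      simp only [Finset.mem_union, Finset.mem_erase, Finset.mem_univ, and_true, iff_true]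
      rcases eq_or_ne a x with rfl | h
      · exact Or.inr hxy
      · exact Or.inl h
    have hi : (Finset.univ.erase x) ∩ (Finset.univ.erase y)
        = ({x,y} : Finset (Fin (c+2)))ᶜ := by
      ext a
      simp only [Finset.mem_inter, Finset.mem_erase, Finset.mem_univ, and_true,
        Finset.mem_compl, Finset.mem_insert, Finset.mem_singleton]
      tauto
    calc p x * p y
        = (∏ k ∈ (Finset.univ.erase x) ∪ (Finset.univ.erase y), v k) *
            ∏ k ∈ (Finset.univ.erase x) ∩ (Finset.univ.erase y), v k :=
          (Finset.prod_union_inter).symm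
      _ = (∏ k, v k) * ∏ k ∈ ({x,y} : Finset (Fin (c+2)))ᶜ, v k := by rw [hu, hi]
  -- 2 σ_{m-2} σ_m = S² - Q
  have h3 : 2 * (esymm (c+2) c v * esymm (c+2) (c+2) v) = S^2 - Q := by
    have e2 : esymm (c+2) c v * esymm (c+2) (c+2) v
        = ∑ t ∈ (Finset.univ : Finset (Fin (c+2))).powersetCard 2,
            ((∏ k ∈ tᶜ, v k) * ∏ k, v k) := by
      rw [esymm, sum_powersetCard_compl (by omega) (fun t => ∏ i ∈ t, v i)]
      have e3 : c + 2 - c = 2 := by omega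
      rw [e3, h2, Finset.sum_mul]
    rw [e2, sum_powersetCard_two (fun t => (∏ k ∈ tᶜ, v k) * ∏ k, v k)]
    have e4 : ∀ q ∈ (Finset.univ : Finset (Fin (c+2))).offDiag,
        (∏ k ∈ ({q.1, q.2} : Finset (Fin (c+2)))ᶜ, v k) * ∏ k, v k = p q.1 * p q.2 := by
      rintro ⟨x, y⟩ hq
      rw [Finset.mem_offDiag] at hq
      rw [hpq x y hq.2.2]
      ring
    rw [Finset.sum_congr rfl e4]
    have e6 : S^2 = ∑ q ∈ (Finset.univ : Finset (Fin (c+2))) ×ˢ Finset.univ, p q.1 * p q.2 := by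
      rw [Finset.sum_product, sq, hS, Finset.sum_mul_sum]
    have e5 : S^2 = Q + ∑ q ∈ (Finset.univ : Finset (Fin (c+2))).offDiag, p q.1 * p q.2 := by
      rw [e6, ← Finset.diag_union_offDiag Finset.univ,
        Finset.sum_union (Finset.disjoint_diag_offDiag _), Finset.sum_diag]
      congr 1
      rw [hQ]
      exact Finset.sum_congr rfl fun i _ => (sq (p i)).symm
    rw [e5]; ring
  -- Cauchy-Schwarz
  have hCS : S^2 ≤ ((c+2:ℕ):ℝ) * Q := by
    have h := Finset.sum_mul_sq_le_sq_mul_sq Finset.univ p (fun _ => (1:ℝ))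
    simp only [mul_one, one_pow, Finset.sum_const, hcard, nsmul_eq_mul] at h
    rw [← hS, ← hQ] at h
    calc S^2 ≤ Q * ((c+2:ℕ):ℝ) := h
      _ = ((c+2:ℕ):ℝ) * Q := by ring
  -- choose value
  have hch : 2 * (((c+2).choose 2 : ℕ):ℝ) = ((c+2:ℕ):ℝ) * ((c+1:ℕ):ℝ) := by
    have h := Nat.choose_mul_factorial_mul_factorial (show 2 ≤ c+2 by omega)
    have e : c + 2 - 2 = c := by omega
    rw [e] at h
    have hfac : (c+2).factorial = (c+2) * ((c+1) * c.factorial) := by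
      simp [Nat.factorial_succ]
    have h2f : (2:ℕ).factorial = 2 := rfl
    rw [h2f, hfac] at h
    have h' : (c+2).choose 2 * 2 * c.factorial = ((c+2) * (c+1)) * c.factorial := by
      calc (c+2).choose 2 * 2 * c.factorial = (c+2) * ((c+1) * c.factorial) := h
        _ = ((c+2) * (c+1)) * c.factorial := by ring
    have hnat := Nat.eq_of_mul_eq_mul_right (Nat.factorial_pos c) h'
    have := congrArg (fun x : ℕ => (x:ℝ)) hnat
    push_cast at this ⊢
    linarith
  -- finish
  rw [h1]
  have hx : esymm (c+2) c v * esymm (c+2) (c+2) v = (S^2 - Q)/2 := by linarith [h3]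
  rw [hx]
  have hch' : (((c+2).choose 2 : ℕ):ℝ) = (((c:ℝ)+2)*((c:ℝ)+1))/2 := by
    push_cast at hch ⊢; linarith
  rw [hch']
  have hCS' : S^2 ≤ ((c:ℝ)+2) * Q := by push_cast at hCS; linarith
  push_cast
  nlinarith [hCS', mul_le_mul_of_nonneg_left hCS' (show (0:ℝ) ≤ (c:ℝ)+2 by positivity)]

lemma roots_card_iterate (p : Polynomial ℝ) (d : ℕ) :
    Multiset.card p.roots - d ≤ Multiset.card ((⇑Polynomial.derivative)^[d] p).roots := by
  induction d with
  | zero => simp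
  | succ d ih =>
    rw [Function.iterate_succ_apply']
    have h := Polynomial.card_roots_le_derivative ((⇑Polynomial.derivative)^[d] p)
    omega

lemma multiset_exists_fn (m : ℕ) (s : Multiset ℝ) (h : Multiset.card s = m) :
    ∃ v : Fin m → ℝ, Multiset.map v Finset.univ.val = s := by
  induction s using Quot.inductionOn with
  | _ L =>
    have h' : L.length = m := h
    subst h'
    exact ⟨L.get, by rw [Fin.univ_val_map, List.ofFn_get]; rfl⟩

lemma constId (a d : ℕ) :
    (((a+d+2).choose (a+1) : ℕ):ℝ)^2 * (((a+2).choose 2 : ℕ):ℝ) * (((d+1).descFactorial d : ℕ):ℝ)^2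
    = (((a+d+2).choose a : ℕ):ℝ) * (((a+d+2).choose (a+2) : ℕ):ℝ) * ((a+2:ℕ):ℝ)^2 *
      ((((d+2).descFactorial d : ℕ):ℝ) * ((d.descFactorial d : ℕ):ℝ)) := by
  have c1 := Nat.cast_choose ℝ (show a+1 ≤ a+d+2 by omega)
  have c2 := Nat.cast_choose ℝ (show a ≤ a+d+2 by omega)
  have c3 := Nat.cast_choose ℝ (show a+2 ≤ a+d+2 by omega)
  have c4 := Nat.cast_choose ℝ (show 2 ≤ a+2 by omega)
  rw [show a+d+2-(a+1) = d+1 by omega] at c1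
  rw [show a+d+2-a = d+2 by omega] at c2
  rw [show a+d+2-(a+2) = d by omega] at c3
  rw [show a+2-2 = a by omega] at c4
  have f1 : (d+1).descFactorial d = (d+1).factorial := by
    have h := Nat.factorial_mul_descFactorial (show d ≤ d+1 by omega)
    rw [show d+1-d = 1 by omega] at h
    rw [show Nat.factorial 1 = 1 from rfl, one_mul] at h
    exact h
  have f2 : 2 * (d+2).descFactorial d = (d+2).factorial := by
    have h := Nat.factorial_mul_descFactorial (show d ≤ d+2 by omega)
    rw [show d+2-d = 2 by omega] at h
    rw [← h]
    norm_num [Nat.factorial]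
  have f0 : d.descFactorial d = d.factorial := Nat.descFactorial_self d
  have f2' : (((d+2).descFactorial d : ℕ):ℝ) = ((d+2).factorial : ℝ) / 2 := by
    have h := congrArg (fun x : ℕ => (x:ℝ)) f2
    push_cast at h
    linarith
  rw [c1, c2, c3, c4, f0, f1, f2']
  rw [Nat.factorial_succ (a+1), Nat.factorial_succ a, Nat.factorial_succ (d+1),
    Nat.factorial_succ d]
  have ha : ((a.factorial : ℕ):ℝ) ≠ 0 := Nat.cast_ne_zero.mpr (Nat.factorial_ne_zero a)
  have hd : ((d.factorial : ℕ):ℝ) ≠ 0 := Nat.cast_ne_zero.mpr (Nat.factorial_ne_zero d)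
  have hn : (((a+d+2).factorial : ℕ):ℝ) ≠ 0 := Nat.cast_ne_zero.mpr (Nat.factorial_ne_zero _)
  push_cast
  field_simp
  ring

lemma newtonMid (a d : ℕ) (lam : Fin (a+d+2) → ℝ) :
    (((a+d+2).choose (a+1) : ℕ):ℝ)^2 * (esymm (a+d+2) a lam * esymm (a+d+2) (a+2) lam)
      ≤ (((a+d+2).choose a : ℕ):ℝ) * (((a+d+2).choose (a+2) : ℕ):ℝ)
        * (esymm (a+d+2) (a+1) lam)^2 := by
  set P : Polynomial ℝ := ∏ i : Fin (a+d+2), (Polynomial.X + Polynomial.C (lam i)) with hPdef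
  have hcardu : (Finset.univ : Finset (Fin (a+d+2))).card = a+d+2 := by simp
  have hPcoeff : ∀ kk, kk ≤ a+d+2 → P.coeff kk = esymm (a+d+2) (a+d+2-kk) lam := by
    intro kk h
    rw [hPdef, Finset.prod_X_add_C_coeff Finset.univ lam (by rw [hcardu]; exact h), esymm,
      hcardu]
  have hPmonic : P.Monic := Polynomial.monic_prod_of_monic _ _
    (fun i _ => Polynomial.monic_X_add_C (lam i))
  have hPdeg : P.natDegree = a+d+2 := by
    rw [hPdef, Polynomial.natDegree_prod _ _
      (fun i _ => (Polynomial.monic_X_add_C (lam i)).ne_zero)]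
    simp [Polynomial.natDegree_X_add_C]
  have hProots : P.roots = Multiset.map (fun i => -lam i) Finset.univ.val := by
    have e : P = ((Multiset.map (fun i => -lam i) Finset.univ.val).map
        (fun r => Polynomial.X - Polynomial.C r)).prod := by
      rw [Multiset.map_map, hPdef, Finset.prod_eq_multiset_prod]
      congr 1
      apply Multiset.map_congr rfl
      intro i _
      simp [sub_neg_eq_add]
    rw [e, Polynomial.roots_multiset_prod_X_sub_C]
  have hProotsCard : Multiset.card P.roots = a+d+2 := by
    rw [hProots]
    simp
  set Q : Polynomial ℝ := (⇑Polynomial.derivative)^[d] P with hQdef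
  have hQub : Q.natDegree ≤ a + 2 := by
    have h := Polynomial.natDegree_iterate_derivative P d
    rw [← hQdef, hPdeg] at h
    omega
  have hQlb : a + 2 ≤ Multiset.card Q.roots := by
    have h := roots_card_iterate P d
    rw [← hQdef, hProotsCard] at h
    omega
  have hQc := Polynomial.card_roots' Q
  have hQdeg : Q.natDegree = a+2 := by omega
  have hQcard : Multiset.card Q.roots = a+2 := by omega
  have hQcoeff : ∀ i, Q.coeff i = (((i+d).descFactorial d : ℕ):ℝ) * P.coeff (i+d) := by
    intro i
    rw [hQdef, Polynomial.coeff_iterate_derivative, nsmul_eq_mul]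
  have hlc : Q.leadingCoeff = (((a+d+2).descFactorial d : ℕ):ℝ) := by
    rw [Polynomial.leadingCoeff, hQdeg, hQcoeff, show a+2+d = a+d+2 by omega,
      hPcoeff _ (le_refl _), show a+d+2-(a+d+2) = 0 by omega]
    have h0 : esymm (a+d+2) 0 lam = 1 := by
      simp [esymm, Finset.powersetCard_zero]
    rw [h0, mul_one]
  have hlcpos : (0:ℝ) < Q.leadingCoeff := by
    rw [hlc]
    have h : 0 < (a+d+2).descFactorial d := Nat.pos_of_ne_zero (fun hz => by
      rw [Nat.descFactorial_eq_zero_iff_lt] at hz; omega)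
    exact_mod_cast h
  -- the roots as a function
  obtain ⟨v, hv⟩ := multiset_exists_fn (a+2) Q.roots hQcard
  have hesymm : ∀ t : ℕ, Q.roots.esymm t = esymm (a+2) t v := by
    intro t
    rw [← hv, Finset.esymm_map_val]
    rfl
  -- Vieta for Q
  have hvieta : ∀ kk, kk ≤ a+2 → Q.coeff kk
      = Q.leadingCoeff * (-1)^(a+2-kk) * esymm (a+2) (a+2-kk) v := by
    intro kk h
    rw [← hesymm]
    have := Polynomial.coeff_eq_esymm_roots_of_card
      (hQcard.trans hQdeg.symm) (k := kk) (by omega)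
    rwa [hQdeg] at this
  -- the three coefficient equations
  have E2 : Q.leadingCoeff * (-1)^a * esymm (a+2) a v
      = (((2+d).descFactorial d : ℕ):ℝ) * esymm (a+d+2) a lam := by
    have h1 := hvieta 2 (by omega)
    rw [show a+2-2 = a by omega] at h1
    have h2 := hQcoeff 2
    rw [hPcoeff (2+d) (by omega), show a+d+2-(2+d) = a by omega] at h2
    rw [← h1, h2]
  have E1 : Q.leadingCoeff * (-1)^(a+1) * esymm (a+2) (a+1) v
      = (((1+d).descFactorial d : ℕ):ℝ) * esymm (a+d+2) (a+1) lam := by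
    have h1 := hvieta 1 (by omega)
    rw [show a+2-1 = a+1 by omega] at h1
    have h2 := hQcoeff 1
    rw [hPcoeff (1+d) (by omega), show a+d+2-(1+d) = a+1 by omega] at h2
    rw [← h1, h2]
  have E0 : Q.leadingCoeff * (-1)^(a+2) * esymm (a+2) (a+2) v
      = ((d.descFactorial d : ℕ):ℝ) * esymm (a+d+2) (a+2) lam := by
    have h1 := hvieta 0 (by omega)
    rw [show a+2-0 = a+2 by omega] at h1
    have h2 := hQcoeff 0
    rw [hPcoeff (0+d) (by omega), show a+d+2-(0+d) = a+2 by omega,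
      show (0+d : ℕ) = d by omega] at h2
    rw [← h1, h2]
  -- signs
  have hsign : ((-1:ℝ))^a * ((-1:ℝ))^(a+2) = 1 := by
    rw [← pow_add, show a+(a+2) = 2*(a+1) by ring, pow_mul]
    norm_num
  have hsign1 : (((-1:ℝ))^(a+1))^2 = 1 := by
    rw [← pow_mul, mul_comm, pow_mul]
    norm_num
  set lc := Q.leadingCoeff with hlcdef
  -- transfer topNewton through the equations
  have m1 : lc^2 * (esymm (a+2) a v * esymm (a+2) (a+2) v)
      = ((((2+d).descFactorial d : ℕ):ℝ) * esymm (a+d+2) a lam)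
        * (((d.descFactorial d : ℕ):ℝ) * esymm (a+d+2) (a+2) lam) := by
    rw [← E2, ← E0]
    calc lc^2 * (esymm (a+2) a v * esymm (a+2) (a+2) v)
        = ((-1:ℝ)^a * (-1)^(a+2)) * (lc^2 * (esymm (a+2) a v * esymm (a+2) (a+2) v)) := by
          rw [hsign, one_mul]
      _ = (lc * (-1)^a * esymm (a+2) a v) * (lc * (-1)^(a+2) * esymm (a+2) (a+2) v) := by
          ring
  have m2 : lc^2 * (esymm (a+2) (a+1) v)^2
      = ((((1+d).descFactorial d : ℕ):ℝ) * esymm (a+d+2) (a+1) lam)^2 := by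
    rw [← E1]
    calc lc^2 * (esymm (a+2) (a+1) v)^2
        = ((-1:ℝ)^(a+1))^2 * (lc^2 * (esymm (a+2) (a+1) v)^2) := by rw [hsign1, one_mul]
      _ = (lc * (-1)^(a+1) * esymm (a+2) (a+1) v)^2 := by ring
  have key := mul_le_mul_of_nonneg_left (topNewton a v) (le_of_lt (pow_pos hlcpos 2))
  rw [show lc^2 * (((a+2:ℕ):ℝ)^2 * (esymm (a+2) a v * esymm (a+2) (a+2) v))
      = ((a+2:ℕ):ℝ)^2 * (lc^2 * (esymm (a+2) a v * esymm (a+2) (a+2) v)) from by ring,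
    m1,
    show lc^2 * ((((a+2).choose 2 : ℕ):ℝ) * (esymm (a+2) (a+1) v)^2)
      = (((a+2).choose 2 : ℕ):ℝ) * (lc^2 * (esymm (a+2) (a+1) v)^2) from by ring,
    m2] at key
  -- positivity facts and the constant identity (before abbreviating)
  have hconst := constId a d
  have hA1 : (0:ℝ) < (((1+d).descFactorial d : ℕ):ℝ) := by
    have h : 0 < (1+d).descFactorial d := Nat.pos_of_ne_zero (fun hz => by
      rw [Nat.descFactorial_eq_zero_iff_lt] at hz; omega)
    exact_mod_cast h
  have hA2 : (0:ℝ) < (((2+d).descFactorial d : ℕ):ℝ) := by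
    have h : 0 < (2+d).descFactorial d := Nat.pos_of_ne_zero (fun hz => by
      rw [Nat.descFactorial_eq_zero_iff_lt] at hz; omega)
    exact_mod_cast h
  have hA0 : (0:ℝ) < ((d.descFactorial d : ℕ):ℝ) := by
    have h : 0 < d.descFactorial d := by
      rw [Nat.descFactorial_self]; exact Nat.factorial_pos d
    exact_mod_cast h
  have hN : (0:ℝ) < ((a+2:ℕ):ℝ) := by
    have h : (0:ℕ) < a+2 := by omega
    exact_mod_cast h
  have hCb : (0:ℝ) < (((a+d+2).choose (a+1) : ℕ):ℝ) := by
    have h : 0 < (a+d+2).choose (a+1) := Nat.choose_pos (by omega)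
    exact_mod_cast h
  set A2 := (((2+d).descFactorial d : ℕ):ℝ)
  set A1 := (((1+d).descFactorial d : ℕ):ℝ)
  set A0 := ((d.descFactorial d : ℕ):ℝ)
  set Ca := (((a+d+2).choose a : ℕ):ℝ)
  set Cb := (((a+d+2).choose (a+1) : ℕ):ℝ)
  set Cc := (((a+d+2).choose (a+2) : ℕ):ℝ)
  set Ch := (((a+2).choose 2 : ℕ):ℝ)
  set N := ((a+2:ℕ):ℝ)
  -- multiply key by Cb^2 and divide by N^2 A2 A0
  rw [show d+1 = 1+d by omega, show d+2 = 2+d by omega] at hconst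
  set x := esymm (a+d+2) a lam
  set y := esymm (a+d+2) (a+1) lam
  set z := esymm (a+d+2) (a+2) lam
  -- goal : Cb^2 * (x*z) ≤ Ca * Cc * y^2
  have key2 := mul_le_mul_of_nonneg_left key (le_of_lt (pow_pos hCb 2))
  -- key2 : Cb^2 * (N^2 * (A2*x * (A0*z))) ≤ Cb^2 * (Ch * (A1*y)^2)
  have hr : Cb^2 * (Ch * (A1*y)^2) = (Ca * Cc * y^2) * (N^2 * (A2 * A0)) := by
    calc Cb^2 * (Ch * (A1*y)^2) = (Cb^2 * Ch * A1^2) * y^2 := by ring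
      _ = (Ca * Cc * N^2 * (A2 * A0)) * y^2 := by rw [hconst]
      _ = (Ca * Cc * y^2) * (N^2 * (A2 * A0)) := by ring
  have hl : Cb^2 * (N^2 * (A2*x * (A0*z))) = (Cb^2 * (x*z)) * (N^2 * (A2 * A0)) := by ring
  rw [hl, hr] at key2
  have hpos : (0:ℝ) < N^2 * (A2 * A0) := by positivity
  exact le_of_mul_le_mul_right key2 hpos

lemma newton' (n j : ℕ) (hj1 : 1 ≤ j) (hjn : j + 1 ≤ n) (lam : Fin n → ℝ) :
    ((n.choose j : ℕ):ℝ)^2 * (esymm n (j-1) lam * esymm n (j+1) lam)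
      ≤ ((n.choose (j-1) : ℕ):ℝ) * ((n.choose (j+1) : ℕ):ℝ) * (esymm n j lam)^2 := by
  obtain ⟨a, rfl⟩ : ∃ a, j = a + 1 := ⟨j-1, by omega⟩
  obtain ⟨d, rfl⟩ : ∃ d, n = a + d + 2 := ⟨n - a - 2, by omega⟩
  simpa using newtonMid a d lam

lemma avg_mono (k l r s : ℕ) (D : ℕ → ℝ)
    (hmono : ∀ i j : ℕ, i ≤ j → j + 1 ≤ k → D j ≤ D i)
    (hkl : l < k) (hsr : s < r) (hrk : r ≤ k) (hsl : s ≤ l) :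
    ((r:ℝ) - s) * (∑ i ∈ Finset.Ico l k, D i) ≤ ((k:ℝ) - l) * (∑ i ∈ Finset.Ico s r, D i) := by
  obtain ⟨b, rfl⟩ : ∃ b, r = b + 1 := ⟨r-1, by omega⟩
  have cast_sub : ∀ p q : ℕ, q ≤ p → ((p - q : ℕ):ℝ) = (p:ℝ) - q := fun p q h => by
    push_cast [h]; ring
  have hb1 : Finset.card (Finset.Ico l k) = k - l := Nat.card_Ico l k
  -- bound 1 : sum over [l,k) ≤ (k-l) * D l
  have b1 : ∑ i ∈ Finset.Ico l k, D i ≤ ((k:ℝ) - l) * D l := by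
    have h := Finset.sum_le_card_nsmul (Finset.Ico l k) D (D l) (fun i hi => by
      rw [Finset.mem_Ico] at hi
      exact hmono l i hi.1 (by omega))
    rw [hb1, nsmul_eq_mul, cast_sub k l hkl.le] at h
    exact h
  -- bound 2 : sum over [s,l) ≥ (l-s) * D l
  have b2 : ((l:ℝ) - s) * D l ≤ ∑ i ∈ Finset.Ico s l, D i := by
    have h := Finset.card_nsmul_le_sum (Finset.Ico s l) D (D l) (fun i hi => by
      rw [Finset.mem_Ico] at hi
      exact hmono i l hi.2.le (by omega))
    rw [Nat.card_Ico, nsmul_eq_mul, cast_sub l s hsl] at h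
    exact h
  -- bound 3 : sum over [b+1,k) ≤ (k-(b+1)) * D b
  have b3 : ∑ i ∈ Finset.Ico (b+1) k, D i ≤ ((k:ℝ) - (b+1)) * D b := by
    have h := Finset.sum_le_card_nsmul (Finset.Ico (b+1) k) D (D b) (fun i hi => by
      rw [Finset.mem_Ico] at hi
      exact hmono b i (by omega) (by omega))
    rw [Nat.card_Ico, nsmul_eq_mul, cast_sub k (b+1) hrk] at h
    push_cast at h ⊢
    linarith
  -- bound 4 : sum over [s,b+1) ≥ (b+1-s) * D b
  have b4 : ((b:ℝ) + 1 - s) * D b ≤ ∑ i ∈ Finset.Ico s (b+1), D i := by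
    have h := Finset.card_nsmul_le_sum (Finset.Ico s (b+1)) D (D b) (fun i hi => by
      rw [Finset.mem_Ico] at hi
      exact hmono i b (by omega) (by omega))
    rw [Nat.card_Ico, nsmul_eq_mul, cast_sub (b+1) s (by omega)] at h
    push_cast at h ⊢
    linarith
  have hsplit1 : ∑ i ∈ Finset.Ico s k, D i
      = (∑ i ∈ Finset.Ico s l, D i) + ∑ i ∈ Finset.Ico l k, D i :=
    (Finset.sum_Ico_consecutive D hsl hkl.le).symm
  have hsplit2 : ∑ i ∈ Finset.Ico s k, D i
      = (∑ i ∈ Finset.Ico s (b+1), D i) + ∑ i ∈ Finset.Ico (b+1) k, D i :=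
    (Finset.sum_Ico_consecutive D (by omega) hrk).symm
  set A := ∑ i ∈ Finset.Ico l k, D i
  set B := ∑ i ∈ Finset.Ico s l, D i
  set Cc := ∑ i ∈ Finset.Ico s (b+1), D i
  set Ee := ∑ i ∈ Finset.Ico (b+1) k, D i
  have step1 : ((k:ℝ) - s) * A ≤ ((k:ℝ) - l) * (B + A) := by
    have m1 := mul_le_mul_of_nonneg_left b1 (show (0:ℝ) ≤ (l:ℝ) - s by
      have : (s:ℝ) ≤ l := by exact_mod_cast hsl
      linarith)
    have m2 := mul_le_mul_of_nonneg_left b2 (show (0:ℝ) ≤ (k:ℝ) - l by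
      have : (l:ℝ) ≤ k := by exact_mod_cast hkl.le
      linarith)
    nlinarith [m1, m2]
  have step2 : (((b:ℝ)+1) - s) * (Cc + Ee) ≤ ((k:ℝ) - s) * Cc := by
    have m3 := mul_le_mul_of_nonneg_left b3 (show (0:ℝ) ≤ ((b:ℝ)+1) - s by
      have : (s:ℝ) ≤ (b:ℝ)+1 := by exact_mod_cast (by omega : s ≤ b+1)
      linarith)
    have m4 := mul_le_mul_of_nonneg_left b4 (show (0:ℝ) ≤ (k:ℝ) - (b+1) by
      have : ((b:ℝ)+1) ≤ k := by exact_mod_cast hrk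
      linarith)
    nlinarith [m3, m4]
  have hks : (0:ℝ) < (k:ℝ) - s := by
    have : (s:ℝ) < k := by exact_mod_cast (by omega : s < k)
    linarith
  have hrs0 : (0:ℝ) ≤ ((b:ℝ)+1) - s := by
    have : (s:ℝ) ≤ (b:ℝ)+1 := by exact_mod_cast (by omega : s ≤ b+1)
    linarith
  have hkl0 : (0:ℝ) ≤ (k:ℝ) - l := by
    have : (l:ℝ) ≤ k := by exact_mod_cast hkl.le
    linarith
  -- combine
  have c1 := mul_le_mul_of_nonneg_left step1 hrs0
  have c2 := mul_le_mul_of_nonneg_left step2 hkl0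
  rw [hsplit1] at hsplit2
  -- B + A = Cc + Ee
  have hsub : (((b:ℝ)+1) - s) * (((k:ℝ) - l) * (B+A))
      = ((k:ℝ) - l) * ((((b:ℝ)+1) - s) * (Cc + Ee)) := by
    rw [hsplit2]; ring
  have final : ((k:ℝ) - s) * ((((b:ℝ)+1) - s) * A) ≤ ((k:ℝ) - s) * (((k:ℝ) - l) * Cc) := by
    nlinarith [c1, c2, hsub]
  have := le_of_mul_le_mul_left final hks
  push_cast
  linarith [this]

/-- Generalized Newton–MacLaurin inequality: for `λ ∈ Γ_k` and `k > l ≥ 0`,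
`r > s ≥ 0`, `k ≥ r`, `l ≥ s`,
`[(σ_k/C(n,k))/(σ_l/C(n,l))]^{1/(k-l)} ≤ [(σ_r/C(n,r))/(σ_s/C(n,s))]^{1/(r-s)}`,
with equality when `λ₁ = ⋯ = λ_n > 0`. -/
theorem stmt5 (n k l r s : ℕ) (hkn : k ≤ n) (hkl : l < k) (hsr : s < r)
    (hrk : r ≤ k) (hsl : s ≤ l) (lam : Fin n → ℝ) (hlam : lam ∈ gardingCone n k) :
    ((esymm n k lam / (n.choose k)) / (esymm n l lam / (n.choose l)))
        ^ ((1 : ℝ) / ((k : ℝ) - (l : ℝ))) ≤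
      ((esymm n r lam / (n.choose r)) / (esymm n s lam / (n.choose s)))
        ^ ((1 : ℝ) / ((r : ℝ) - (s : ℝ))) ∧
    ((∀ i j : Fin n, lam i = lam j) → (∀ i, 0 < lam i) →
      ((esymm n k lam / (n.choose k)) / (esymm n l lam / (n.choose l)))
          ^ ((1 : ℝ) / ((k : ℝ) - (l : ℝ))) =
        ((esymm n r lam / (n.choose r)) / (esymm n s lam / (n.choose s)))
          ^ ((1 : ℝ) / ((r : ℝ) - (s : ℝ)))) := by
  have hk1 : 1 ≤ k := by omega
  have hn1 : 1 ≤ n := by omega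
  -- normalized symmetric means
  set E : ℕ → ℝ := fun i => esymm n i lam / (n.choose i) with hE
  have hE0 : E 0 = 1 := by
    have h0 : esymm n 0 lam = 1 := by simp [esymm]
    simp [hE, h0]
  have hEpos : ∀ i, i ≤ k → 0 < E i := by
    intro i hi
    rcases Nat.eq_zero_or_pos i with rfl | hpos
    · rw [hE0]; norm_num
    · have hc : (0:ℝ) < (n.choose i : ℝ) := by
        exact_mod_cast Nat.choose_pos (le_trans hi hkn)
      exact div_pos (hlam i hpos hi) hc
  -- Newton's inequality in normalized form
  have hEnewton : ∀ i, 1 ≤ i → i + 1 ≤ k → E (i-1) * E (i+1) ≤ (E i)^2 := by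
    intro i h1 h2
    have h := newton' n i h1 (by omega) lam
    have c0 : (0:ℝ) < (n.choose i : ℝ) := by
      exact_mod_cast Nat.choose_pos (by omega)
    have cm : (0:ℝ) < (n.choose (i-1) : ℝ) := by
      exact_mod_cast Nat.choose_pos (by omega)
    have cp : (0:ℝ) < (n.choose (i+1) : ℝ) := by
      exact_mod_cast Nat.choose_pos (by omega)
    show esymm n (i-1) lam / (n.choose (i-1)) * (esymm n (i+1) lam / (n.choose (i+1)))
      ≤ (esymm n i lam / (n.choose i))^2
    rw [div_mul_div_comm, div_pow, div_le_div_iff₀ (by positivity) (by positivity)]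
    nlinarith [h]
  set L : ℕ → ℝ := fun i => Real.log (E i) with hL
  set D : ℕ → ℝ := fun i => L (i+1) - L i with hD
  have hcons : ∀ i, i + 2 ≤ k → D (i+1) ≤ D i := by
    intro i h
    have hnew := hEnewton (i+1) (by omega) (by omega)
    simp only [Nat.add_sub_cancel] at hnew
    have h1 := hEpos i (by omega)
    have h2 := hEpos (i+1) (by omega)
    have h3 := hEpos (i+1+1) (by omega)
    have hlog : Real.log (E i * E (i+1+1)) ≤ Real.log ((E (i+1))^2) :=
      Real.log_le_log (by positivity) hnew
    rw [Real.log_mul (ne_of_gt h1) (ne_of_gt h3), Real.log_pow] at hlog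
    show L (i+1+1) - L (i+1) ≤ L (i+1) - L i
    have e1 : L i = Real.log (E i) := rfl
    have e2 : L (i+1) = Real.log (E (i+1)) := rfl
    have e3 : L (i+1+1) = Real.log (E (i+1+1)) := rfl
    rw [e1, e2, e3]
    push_cast at hlog
    linarith
  have hmono : ∀ i j : ℕ, i ≤ j → j + 1 ≤ k → D j ≤ D i := by
    intro i j hij
    induction j, hij using Nat.le_induction with
    | base => intro _; exact le_refl _
    | succ j hij ih =>
      intro hjk
      exact le_trans (hcons j (by omega)) (ih (by omega))
  have htel : ∀ a b : ℕ, a ≤ b → L b - L a = ∑ i ∈ Finset.Ico a b, D i := by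
    intro a b hab
    rw [Finset.sum_Ico_eq_sub _ hab]
    have hr1 : ∑ i ∈ Finset.range b, D i = L b - L 0 := Finset.sum_range_sub (fun i => L i) b
    have hr2 : ∑ i ∈ Finset.range a, D i = L a - L 0 := Finset.sum_range_sub (fun i => L i) a
    rw [hr1, hr2]
    ring
  have hmain : (L k - L l) * ((1:ℝ) / ((k:ℝ) - l)) ≤ (L r - L s) * ((1:ℝ) / ((r:ℝ) - s)) := by
    have h := avg_mono k l r s D hmono hkl hsr hrk hsl
    rw [← htel l k hkl.le, ← htel s r hsr.le] at h
    have hkl' : (0:ℝ) < (k:ℝ) - l := by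
      have : (l:ℝ) < k := by exact_mod_cast hkl
      linarith
    have hrs' : (0:ℝ) < (r:ℝ) - s := by
      have : (s:ℝ) < r := by exact_mod_cast hsr
      linarith
    rw [mul_one_div, mul_one_div, div_le_div_iff₀ hkl' hrs']
    nlinarith [h]
  constructor
  · -- main inequality
    have hbase1 : (0:ℝ) < E k / E l := div_pos (hEpos k le_rfl) (hEpos l (by omega))
    have hbase2 : (0:ℝ) < E r / E s := div_pos (hEpos r (by omega)) (hEpos s (by omega))
    show (E k / E l) ^ ((1:ℝ) / ((k:ℝ) - l)) ≤ (E r / E s) ^ ((1:ℝ) / ((r:ℝ) - s))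
    rw [Real.rpow_def_of_pos hbase1, Real.rpow_def_of_pos hbase2]
    apply Real.exp_le_exp.mpr
    rw [Real.log_div (ne_of_gt (hEpos k le_rfl)) (ne_of_gt (hEpos l (by omega))),
      Real.log_div (ne_of_gt (hEpos r (by omega))) (ne_of_gt (hEpos s (by omega)))]
    exact hmain
  · -- equality case
    intro hconst hpos
    have i0 : Fin n := ⟨0, by omega⟩
    set c := lam i0 with hc
    have hc0 : (0:ℝ) < c := hpos i0
    have hlamc : ∀ j : Fin n, lam j = c := fun j => hconst j i0
    have hesc : ∀ i, esymm n i lam = (n.choose i : ℝ) * c^i := by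
      intro i
      rw [esymm]
      have hcongr : ∀ t ∈ (Finset.univ : Finset (Fin n)).powersetCard i,
          ∏ j ∈ t, lam j = c^i := by
        intro t ht
        rw [Finset.mem_powersetCard_univ] at ht
        calc ∏ j ∈ t, lam j = ∏ _j ∈ t, c := Finset.prod_congr rfl (fun j _ => hlamc j)
          _ = c^t.card := Finset.prod_const c
          _ = c^i := by rw [ht]
      rw [Finset.sum_congr rfl hcongr, Finset.sum_const, Finset.card_powersetCard,
        nsmul_eq_mul]
      simp
    have hval : ∀ (p q : ℕ), q < p → p ≤ n →
        ((esymm n p lam / (n.choose p)) / (esymm n q lam / (n.choose q)))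
          ^ ((1:ℝ)/((p:ℝ)-(q:ℝ))) = c := by
      intro p q hqp hpn
      have hcp : ((n.choose p : ℕ):ℝ) ≠ 0 := by
        have := Nat.choose_pos hpn
        positivity
      have hcq : ((n.choose q : ℕ):ℝ) ≠ 0 := by
        have := Nat.choose_pos (show q ≤ n by omega)
        positivity
      rw [hesc p, hesc q, mul_div_cancel_left₀ (c^p) hcp, mul_div_cancel_left₀ (c^q) hcq]
      have hpow : c^p / c^q = c^(p-q) := (pow_sub₀ c (ne_of_gt hc0) hqp.le).symm
      rw [hpow, ← Real.rpow_natCast c (p-q), ← Real.rpow_mul (le_of_lt hc0),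
        Nat.cast_sub hqp.le, mul_one_div, div_self (by
          have : (q:ℝ) < p := by exact_mod_cast hqp
          linarith), Real.rpow_one]
    rw [hval k l hkl hkn, hval r s hsr (by omega)]
end

section
/- For λ in the Gårding cone Γ_k and integers n ≥ k > l ≥ 0, the partial derivative ∂/∂λ_i [σ_k(λ)/σ_l(λ)] is strictly positive for every 1 ≤ i ≤ n. -/
/-!
Write `μ` for `λ` with its `i`-th entry removed. Since `σ_j(λ) = σ_j(μ) + λ_i σ_{j-1}(μ)`, the
derivative has the sign of `σ_{k-1}(μ) σ_l(μ) - σ_k(μ) σ_{l-1}(μ)`. Newton's inequalities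
`(j + 1)(m - j + 1) σ_{j-1} σ_{j+1} ≤ j (m - j) σ_j²`, valid for any `m` reals, say in particular
that `j ↦ σ_{j+1} / σ_j` is strictly decreasing as long as it is positive. This gives both
`σ_j(μ) > 0` for `j < k` (by induction on `k`) and the sign of the numerator.

Newton's inequalities reduce to the case of two reals: replacing `∏ (X + r)` by its derivative keeps
all roots real (Rolle) and keeps `σ_j / (m choose j)`, which lowers `m`; replacing every `r` by
`r⁻¹` exchanges `σ_j` and `σ_{m-j}` up to the factor `∏ r`, which exchanges `j` and `m - j - 2`.
-/

theorem mul_lt_mul_of_strictLogConcave {a : ℕ → ℝ} {l k : ℕ} (hlk : l < k)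
    (hpos : ∀ i ≤ k + 1, 0 < a i) (hlc : ∀ i < k, a i * a (i + 2) < a (i + 1) ^ 2) :
    a (k + 1) * a l < a k * a (l + 1) := by
  induction k, hlk using Nat.le_induction with
  | base => linear_combination hlc l (by omega)
  | succ k hlk ih =>
    have ih' := ih (fun i hi => hpos i (by omega)) (fun i hi => hlc i (by omega))
    have hk := hpos k (by omega)
    refine lt_of_mul_lt_mul_left ?_ hk.le
    calc a k * (a (k + 2) * a l) = (a k * a (k + 2)) * a l := by ring
      _ < a (k + 1) ^ 2 * a l := mul_lt_mul_of_pos_right (hlc k (by omega)) (hpos l (by omega))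
      _ = a (k + 1) * (a (k + 1) * a l) := by ring
      _ < a (k + 1) * (a k * a (l + 1)) := mul_lt_mul_of_pos_left ih' (hpos (k + 1) (by omega))
      _ = a k * (a (k + 1) * a (l + 1)) := by ring

open Polynomial

namespace Multiset

section CommSemiring

variable {R : Type*} [CommSemiring R]

@[simp] theorem esymm_zero (s : Multiset R) : s.esymm 0 = 1 := by
  simp [esymm, powersetCard_zero_left]

theorem esymm_cons_succ (a : R) (s : Multiset R) (j : ℕ) :
    (a ::ₘ s).esymm (j + 1) = s.esymm (j + 1) + a * s.esymm j := by
  simp [esymm, powersetCard_cons, sum_map_mul_left]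

theorem esymm_eq_zero_of_card_lt {s : Multiset R} {j : ℕ} (h : card s < j) : s.esymm j = 0 := by
  simp [esymm, powersetCard_eq_empty _ h]

theorem esymm_card (s : Multiset R) : s.esymm (card s) = s.prod := by
  simp [esymm, powersetCard_self]

end CommSemiring

theorem prod_mul_esymm_map_inv {K : Type*} [Field K] {s : Multiset K} (hs : (0 : K) ∉ s)
    {i r : ℕ} (h : i + r = card s) : s.prod * (s.map (·⁻¹)).esymm i = s.esymm r := by
  induction s using Multiset.induction_on generalizing i r with
  | empty =>
    obtain ⟨rfl, rfl⟩ : i = 0 ∧ r = 0 := by simpa using h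
    simp
  | cons a s ih =>
    have ha : a ≠ 0 := fun h0 => hs (h0 ▸ mem_cons_self a s)
    have hs' : (0 : K) ∉ s := fun h0 => hs (mem_cons_of_mem h0)
    rw [card_cons] at h
    rcases i with _ | i
    · obtain rfl : r = card (a ::ₘ s) := by simp; omega
      rw [esymm_card, prod_cons, esymm_zero, mul_one]
    have hlast : a * s.prod * (a⁻¹ * (s.map (·⁻¹)).esymm i) = s.esymm r := by
      rw [← ih hs' (by omega : i + r = card s)]
      field_simp
    rw [map_cons, esymm_cons_succ, prod_cons, mul_add, hlast]
    rcases r with _ | r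
    · rw [esymm_eq_zero_of_card_lt (by simp; omega)]
      simp
    rw [esymm_cons_succ, ← ih hs' (by omega : i + 1 + r = card s)]
    ring

theorem prod_X_add_C_eq_prod_X_sub_C {R : Type*} [CommRing R] (s : Multiset R) :
    (s.map fun r => X + C r).prod = ((s.map Neg.neg).map fun r => X - C r).prod := by
  simp [map_map]

-- `ν` is minus the roots of the derivative of `∏ (X + r)`, all real by Rolle's theorem.
theorem exists_card_eq_and_esymm_eq (μ : Multiset ℝ) {m : ℕ} (hμ : card μ = m + 1) :
    ∃ ν : Multiset ℝ, card ν = m ∧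
      ∀ j ≤ m, ((m : ℝ) + 1) * ν.esymm j = ((m : ℝ) + 1 - j) * μ.esymm j := by
  set p : ℝ[X] := (μ.map fun r => X + C r).prod
  have hp : p = ((μ.map Neg.neg).map fun r => X - C r).prod := prod_X_add_C_eq_prod_X_sub_C μ
  have hroots : card p.roots = m + 1 := by
    rw [hp, roots_multiset_prod_X_sub_C, card_map, hμ]
  have hdeg : p.natDegree = m + 1 := by
    rw [hp, natDegree_multiset_prod_X_sub_C_eq_card, card_map, hμ]
  have hdeg' : (derivative p).natDegree = m := by
    have := card_roots_le_derivative p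
    have := (derivative p).card_roots'
    have := natDegree_derivative_le p
    omega
  have hsplit : card (derivative p).roots = (derivative p).natDegree := by
    have := card_roots_le_derivative p
    have := (derivative p).card_roots'
    omega
  have hcoeff : ∀ i ≤ m + 1, p.coeff i = μ.esymm (m + 1 - i) := fun i hi => by
    rw [prod_X_add_C_coeff μ (hμ ▸ hi), hμ]
  have hlead : (derivative p).leadingCoeff = m + 1 := by
    rw [leadingCoeff, hdeg', coeff_derivative, hcoeff _ le_rfl]
    simp
  set ν := (derivative p).roots.map Neg.neg
  have hν : card ν = m := by rw [card_map, hsplit, hdeg']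
  have hfac : derivative p = C ((m : ℝ) + 1) * (ν.map fun r => X + C r).prod := by
    have hνneg : ν.map Neg.neg = (derivative p).roots := by simp [ν, map_map]
    rw [prod_X_add_C_eq_prod_X_sub_C, hνneg, ← hlead]
    exact (C_leadingCoeff_mul_prod_multiset_X_sub_C hsplit).symm
  refine ⟨ν, hν, fun j hj => ?_⟩
  have := congrArg (coeff · (m - j)) hfac
  simp only [coeff_derivative, coeff_C_mul] at this
  rw [hcoeff _ (by omega), prod_X_add_C_coeff ν (by omega), hν] at this
  rw [show m - (m - j) = j by omega, show m + 1 - (m - j + 1) = j by omega,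
    Nat.cast_sub hj] at this
  linear_combination -this

theorem esymm_newton_succ {j d : ℕ}
    (ih : ∀ ν : Multiset ℝ, card ν = j + 2 + d →
      ((j : ℝ) + 2) * (d + 2) * (ν.esymm j * ν.esymm (j + 2)) ≤
        ((j : ℝ) + 1) * (d + 1) * ν.esymm (j + 1) ^ 2)
    {μ : Multiset ℝ} (hμ : card μ = j + 2 + (d + 1)) :
    ((j : ℝ) + 2) * (d + 3) * (μ.esymm j * μ.esymm (j + 2)) ≤
      ((j : ℝ) + 1) * (d + 2) * μ.esymm (j + 1) ^ 2 := by
  obtain ⟨ν, hν, hesymm⟩ := exists_card_eq_and_esymm_eq μ (m := j + 2 + d) hμ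
  have hscale : ∀ i ≤ 2,
      ((j : ℝ) + d + 3) * ν.esymm (j + i) = (d + 3 - i) * μ.esymm (j + i) := by
    intro i hi
    have := hesymm (j + i) (by omega)
    push_cast at this
    linear_combination this
  have hA := hscale 0 (by omega)
  have hB := hscale 1 (by omega)
  have hC := hscale 2 (by omega)
  push_cast at hA hB hC
  rw [add_zero] at hA
  set M : ℝ := j + d + 3
  refine le_of_mul_le_mul_left ?_ (by positivity : (0 : ℝ) < (d + 1) * (d + 2))
  calc ((d : ℝ) + 1) * (d + 2) * ((j + 2) * (d + 3) * (μ.esymm j * μ.esymm (j + 2)))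
      = M ^ 2 * ((j + 2) * (d + 2) * (ν.esymm j * ν.esymm (j + 2))) := by
        linear_combination ((j : ℝ) + 2) * (d + 2) *
          (-(M * ν.esymm (j + 2)) * hA - (d + 3) * μ.esymm j * hC)
    _ ≤ M ^ 2 * ((j + 1) * (d + 1) * ν.esymm (j + 1) ^ 2) :=
        mul_le_mul_of_nonneg_left (ih ν hν) (sq_nonneg M)
    _ = (d + 1) * (d + 2) * ((j + 1) * (d + 2) * μ.esymm (j + 1) ^ 2) := by
        linear_combination
          ((j : ℝ) + 1) * (d + 1) * (M * ν.esymm (j + 1) + (d + 2) * μ.esymm (j + 1)) * hB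

theorem esymm_newton_of_card_eq_add_two {j : ℕ}
    (htop : ∀ ν : Multiset ℝ, card ν = j + 2 →
        2 * ((j : ℝ) + 2) * (ν.esymm j * ν.esymm (j + 2)) ≤
        ((j : ℝ) + 1) * ν.esymm (j + 1) ^ 2)
    {d : ℕ} {μ : Multiset ℝ} (hμ : card μ = j + 2 + d) :
    ((j : ℝ) + 2) * (d + 2) * (μ.esymm j * μ.esymm (j + 2)) ≤
      ((j : ℝ) + 1) * (d + 1) * μ.esymm (j + 1) ^ 2 := by
  induction d generalizing μ with
  | zero => simpa [mul_comm _ (2 : ℝ)] using htop μ hμ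
  | succ d ih =>
    push_cast
    linear_combination esymm_newton_succ (fun ν hν => ih hν) hμ

theorem esymm_newton_of_card_eq_two {μ : Multiset ℝ} (hμ : card μ = 2) :
    4 * μ.esymm 2 ≤ μ.esymm 1 ^ 2 := by
  obtain ⟨x, y, rfl⟩ := card_eq_two.1 hμ
  simp only [insert_eq_cons, esymm_pair_one, esymm_pair_two]
  nlinarith [sq_nonneg (x - y)]

theorem esymm_newton_zero {d : ℕ} {μ : Multiset ℝ} (hμ : card μ = 2 + d) :
    2 * ((d : ℝ) + 2) * μ.esymm 2 ≤ ((d : ℝ) + 1) * μ.esymm 1 ^ 2 := by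
  have := esymm_newton_of_card_eq_add_two (j := 0) (d := d)
    (fun ν hν => by norm_num [esymm_newton_of_card_eq_two hν]) (by rwa [zero_add])
  simpa using this

theorem esymm_newton_top {j : ℕ} {μ : Multiset ℝ} (hμ : card μ = j + 2) :
    2 * ((j : ℝ) + 2) * (μ.esymm j * μ.esymm (j + 2)) ≤
      ((j : ℝ) + 1) * μ.esymm (j + 1) ^ 2 := by
  by_cases h0 : (0 : ℝ) ∈ μ
  · rw [← hμ, esymm_card, prod_eq_zero h0]
    simp only [mul_zero]
    positivity
  have hrev : ∀ i r, i + r = j + 2 → μ.esymm r = μ.prod * (μ.map (·⁻¹)).esymm i :=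
    fun i r h => (prod_mul_esymm_map_inv h0 (h.trans hμ.symm)).symm
  rw [hrev 2 j (by omega), hrev 1 (j + 1) (by omega), hrev 0 (j + 2) (by omega),
    esymm_zero]
  have := esymm_newton_zero (d := j) (μ := μ.map (·⁻¹)) (by rw [card_map, hμ, add_comm])
  have hsq := sq_nonneg μ.prod
  nlinarith

theorem esymm_newton {j d : ℕ} {μ : Multiset ℝ} (hμ : card μ = j + 2 + d) :
    ((j : ℝ) + 2) * (d + 2) * (μ.esymm j * μ.esymm (j + 2)) ≤
      ((j : ℝ) + 1) * (d + 1) * μ.esymm (j + 1) ^ 2 :=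
  esymm_newton_of_card_eq_add_two (fun _ => esymm_newton_top) hμ

theorem esymm_mul_esymm_lt_sq {μ : Multiset ℝ} {j : ℕ}
    (h : 0 < μ.esymm j * μ.esymm (j + 2)) :
    μ.esymm j * μ.esymm (j + 2) < μ.esymm (j + 1) ^ 2 := by
  have hcard : j + 2 ≤ card μ := by
    by_contra! hlt
    simp [esymm_eq_zero_of_card_lt hlt] at h
  set d : ℝ := ((card μ - (j + 2) : ℕ) : ℝ)
  have hnewton : ((j : ℝ) + 2) * (d + 2) * (μ.esymm j * μ.esymm (j + 2)) ≤
      ((j : ℝ) + 1) * (d + 1) * μ.esymm (j + 1) ^ 2 := esymm_newton (by omega)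
  have hcoef : ((j : ℝ) + 1) * (d + 1) < (j + 2) * (d + 2) := by
    have : (0 : ℝ) ≤ d := Nat.cast_nonneg _
    nlinarith
  refine lt_of_mul_lt_mul_left ?_ (by positivity : (0 : ℝ) ≤ (j + 1) * (d + 1))
  exact (mul_lt_mul_of_pos_right hcoef h).trans_le hnewton

theorem esymm_mul_esymm_le_sq (μ : Multiset ℝ) (j : ℕ) :
    μ.esymm j * μ.esymm (j + 2) ≤ μ.esymm (j + 1) ^ 2 := by
  rcases le_or_gt (μ.esymm j * μ.esymm (j + 2)) 0 with h | h
  · exact h.trans (sq_nonneg _)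
  · exact (esymm_mul_esymm_lt_sq h).le

theorem esymm_pos_of_esymm_cons_pos {x : ℝ} {μ : Multiset ℝ} {k : ℕ}
    (h : ∀ j ≤ k, 0 < (x ::ₘ μ).esymm j) : ∀ j < k, 0 < μ.esymm j := by
  induction k with
  | zero => intro j hj; omega
  | succ k ih =>
    intro j hj
    have ih' := ih (fun j hj => h j (by omega))
    rcases Nat.lt_or_ge j k with hjk | hjk
    · exact ih' j hjk
    obtain rfl : j = k := by omega
    rcases j with _ | j
    · simp
    -- If `σ_{j+1}(μ) ≤ 0`, positivity of `σ_{j+1}, σ_{j+2}` of `x ::ₘ μ` forces `x > 0` and then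
    -- `σ_j(μ) σ_{j+2}(μ) > σ_{j+1}(μ)²`, against Newton.
    by_contra! hle
    have h1 := h (j + 1) (by omega)
    have h2 := h (j + 2) (by omega)
    rw [esymm_cons_succ] at h1 h2
    have hj := ih' j (by omega)
    have hnewton := esymm_mul_esymm_le_sq μ j
    have hx : 0 < x := by nlinarith
    nlinarith [mul_nonneg hx.le (neg_nonneg.2 hle)]

theorem esymm_succ_mul_esymm_lt {μ : Multiset ℝ} {l k : ℕ} (hlk : l < k)
    (hpos : ∀ j ≤ k, 0 < μ.esymm j) :
    μ.esymm (k + 1) * μ.esymm l < μ.esymm k * μ.esymm (l + 1) := by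
  rcases le_or_gt (μ.esymm (k + 1)) 0 with hk | hk
  · nlinarith [hpos l (by omega), hpos k le_rfl, hpos (l + 1) (by omega)]
  have hpos' : ∀ j ≤ k + 1, 0 < μ.esymm j := fun j hj => by
    rcases (show j ≤ k ∨ j = k + 1 by omega) with hjk | rfl
    exacts [hpos j hjk, hk]
  exact mul_lt_mul_of_strictLogConcave hlk hpos' fun i hi =>
    esymm_mul_esymm_lt_sq (mul_pos (hpos' i (by omega)) (hpos' (i + 2) (by omega)))

theorem hasDerivAt_esymm_cons (μ : Multiset ℝ) (j : ℕ) (x : ℝ) :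
    HasDerivAt (fun t => (t ::ₘ μ).esymm (j + 1)) (μ.esymm j) x := by
  simp only [esymm_cons_succ]
  exact (hasDerivAt_mul_const _).const_add _

end Multiset

theorem esymm_update (n j : ℕ) (lam : Fin n → ℝ) (i : Fin n) (t : ℝ) :
    esymm n j (Function.update lam i t) =
      (t ::ₘ (Finset.univ.erase i).val.map lam).esymm j := by
  rw [esymm, ← Finset.esymm_map_val, ← Multiset.cons_erase (Finset.mem_univ_val i),
    Multiset.map_cons, Function.update_self, Finset.erase_val]
  congr 2
  refine Multiset.map_congr rfl fun x hx => Function.update_of_ne ?_ t lam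
  exact ((Finset.univ : Finset (Fin n)).nodup.mem_erase_iff.1 hx).1

theorem mem_gardingCone_iff {n k : ℕ} {lam : Fin n → ℝ} :
    lam ∈ gardingCone n k ↔ ∀ j ≤ k, 0 < esymm n j lam := by
  refine ⟨fun h j hj => ?_, fun h j _ hj => h j hj⟩
  rcases j with _ | j
  · simp [esymm]
  · exact h (j + 1) (by omega) hj

theorem stmt6_general (n k l : ℕ) (hlk : l < k)
    (lam : Fin n → ℝ) (hlam : lam ∈ gardingCone n k) (i : Fin n) :
    ∃ d : ℝ, 0 < d ∧
      HasDerivAt (fun t : ℝ =>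
        esymm n k (Function.update lam i t) / esymm n l (Function.update lam i t))
        d (lam i) := by
  obtain ⟨k, rfl⟩ : ∃ k', k = k' + 1 := ⟨k - 1, by omega⟩
  set μ := (Finset.univ.erase i).val.map lam
  have hcone : ∀ j ≤ k + 1, 0 < (lam i ::ₘ μ).esymm j := fun j hj => by
    rw [← esymm_update, Function.update_eq_self]
    exact mem_gardingCone_iff.1 hlam j hj
  have hμ : ∀ j ≤ k, 0 < μ.esymm j := fun j hj =>
    Multiset.esymm_pos_of_esymm_cons_pos hcone j (by omega)
  simp only [esymm_update]
  have hnum := Multiset.hasDerivAt_esymm_cons μ k (lam i)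
  rcases l with _ | l
  · simpa using ⟨_, hμ k le_rfl, hnum⟩
  have hden := Multiset.hasDerivAt_esymm_cons μ l (lam i)
  have hden_pos := hcone (l + 1) (by omega)
  refine ⟨_, div_pos ?_ (pow_pos hden_pos 2), hnum.div hden hden_pos.ne'⟩
  have hkey := Multiset.esymm_succ_mul_esymm_lt (by omega : l < k) hμ
  rw [Multiset.esymm_cons_succ, Multiset.esymm_cons_succ]
  linarith

/-- For `λ ∈ Γ_k` and `n ≥ k > l ≥ 0`, the partial derivative
`∂/∂λ_i [σ_k(λ)/σ_l(λ)]` is strictly positive for every `i`. -/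
theorem stmt6 (n k l : ℕ) (hkn : k ≤ n) (hlk : l < k)
    (lam : Fin n → ℝ) (hlam : lam ∈ gardingCone n k) (i : Fin n) :
    ∃ d : ℝ, 0 < d ∧
      HasDerivAt (fun t : ℝ =>
        esymm n k (Function.update lam i t) / esymm n l (Function.update lam i t))
        d (lam i) :=
  stmt6_general n k l hlk lam hlam i
end
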